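/- arXiv:2204.04569 — 2 statements merged into one kernel-verified Lean document; each statement's English description precedes it below -/
import Mathlib

section
/- Let ε > 0 and β_ε be defined by β_ε(s) = s/ε for s < -ε, β_ε(s) = -exp(2(s+ε)/(s-ε)) for -ε ≤ s < ε, and β_ε(s) = 0 for s ≥ ε. Then for all s ∈ ℝ: β_ε(s)·max(0,s) ≥ -ε and β_ε(s)·max(0,-s) ≤ -(max(0,-s))²/ε + ε. -/
/-! On `s < -ε` the penalty is linear, `β_ε(s) = s / ε`, and both products are exact quadratics
in `s`. Elsewhere `β_ε` takes values in `[-1, 0]` (the exponent `2(s+ε)/(s-ε)` is nonpositive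
on `[-ε, ε)`), so it suffices that the relevant part of `s` is at most `ε` there, except for the
positive part on `s ≥ ε`, where `β_ε` vanishes. -/

noncomputable def betaPen (ε s : ℝ) : ℝ :=
  if s < -ε then s / ε
  else if s < ε then -Real.exp (2 * (s + ε) / (s - ε))
  else 0

namespace betaPen

variable {ε s : ℝ}

lemma of_lt_neg (hs : s < -ε) : betaPen ε s = s / ε := if_pos hs

lemma of_le (hε : 0 ≤ ε) (hs : ε ≤ s) : betaPen ε s = 0 := by
  rw [betaPen, if_neg (by linarith), if_neg (not_lt.mpr hs)]

lemma mem_Icc_of_neg_le (hs : -ε ≤ s) : betaPen ε s ∈ Set.Icc (-1) 0 := by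
  rw [betaPen, if_neg (not_lt.mpr hs)]
  split_ifs with hsε
  · have hexp : Real.exp (2 * (s + ε) / (s - ε)) ≤ 1 :=
      Real.exp_le_one_iff.mpr (div_nonpos_of_nonneg_of_nonpos (by linarith) (by linarith))
    exact ⟨neg_le_neg hexp, neg_nonpos.mpr (Real.exp_pos _).le⟩
  · norm_num

lemma nonpos (hε : 0 < ε) : betaPen ε s ≤ 0 := by
  rcases lt_or_ge s (-ε) with hs | hs
  · rw [of_lt_neg hs]
    exact div_nonpos_of_nonpos_of_nonneg (by linarith) hε.le
  · exact (mem_Icc_of_neg_le hs).2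

lemma mul_max_zero_ge (hε : 0 < ε) : -ε ≤ betaPen ε s * max 0 s := by
  rcases lt_or_ge s (-ε) with hs | hs
  · rw [max_eq_left (by linarith), mul_zero]
    exact (neg_neg_of_pos hε).le
  rcases lt_or_ge s ε with hsε | hsε
  · obtain ⟨hlo, hhi⟩ := mem_Icc_of_neg_le hs
    have hm : max 0 s ≤ ε := max_le hε.le hsε.le
    calc -ε ≤ -1 * max 0 s := by linarith
      _ ≤ betaPen ε s * max 0 s := mul_le_mul_of_nonneg_right hlo (le_max_left 0 s)
  · rw [of_le hε.le hsε, zero_mul]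
    exact (neg_neg_of_pos hε).le

lemma mul_max_zero_neg_le (hε : 0 < ε) :
    betaPen ε s * max 0 (-s) ≤ -(max 0 (-s)) ^ 2 / ε + ε := by
  rcases lt_or_ge s (-ε) with hs | hs
  · rw [of_lt_neg hs, max_eq_right (by linarith)]
    have : s / ε * -s = -(-s) ^ 2 / ε := by ring
    linarith
  · set n := max 0 (-s)
    have hn : 0 ≤ n := le_max_left 0 (-s)
    have hnε : n ≤ ε := max_le hε.le (by linarith)
    have hprod : betaPen ε s * n ≤ 0 := mul_nonpos_of_nonpos_of_nonneg (nonpos hε) hn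
    have hsq : n ^ 2 / ε ≤ ε := by
      rw [div_le_iff₀ hε]
      nlinarith
    rw [neg_div]
    linarith

end betaPen

theorem stmt_2 (ε : ℝ) (hε : 0 < ε) (s : ℝ) :
    betaPen ε s * max 0 s ≥ -ε ∧
    betaPen ε s * max 0 (-s) ≤ -(max 0 (-s)) ^ 2 / ε + ε :=
  ⟨betaPen.mul_max_zero_ge hε, betaPen.mul_max_zero_neg_le hε⟩
end

section
/- Let ε > 0 and β_ε be the mollified penalty function defined by β_ε(s) = s/ε for s < -ε, β_ε(s) = -exp(2(s+ε)/(s-ε)) for -ε ≤ s < ε, β_ε(s) = 0 for s ≥ ε. Then β_ε is continuously differentiable on ℝ with 0 ≤ β_ε'(s) ≤ 1/ε for all s. -/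
open Real Set Filter

section Gluing

variable {f g : ℝ → ℝ} {a : ℝ}

theorem hasDerivAt_ite_lt (hf : Differentiable ℝ f) (hg : Differentiable ℝ g) (ha : f a = g a)
    (ha' : deriv f a = deriv g a) (x : ℝ) :
    HasDerivAt (fun x => if x < a then f x else g x) (if x < a then deriv f x else deriv g x) x := by
  rcases lt_trichotomy x a with hx | rfl | hx
  · rw [if_pos hx]
    refine (hf x).hasDerivAt.congr_of_eventuallyEq ?_
    filter_upwards [Iio_mem_nhds hx] with y hy
    exact if_pos hy
  · rw [if_neg (lt_irrefl x), ← hasDerivWithinAt_univ, ← Iic_union_Ici]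
    refine HasDerivWithinAt.union ?_ ?_
    · rw [← ha']
      refine (hf x).hasDerivAt.hasDerivWithinAt.congr (fun y hy => ?_) (by simp [ha])
      split_ifs with hyx
      · rfl
      · rw [le_antisymm hy (not_lt.1 hyx), ha]
    · exact (hg x).hasDerivAt.hasDerivWithinAt.congr (fun y hy => if_neg (not_lt.2 hy)) (by simp)
  · rw [if_neg hx.not_gt]
    refine (hg x).hasDerivAt.congr_of_eventuallyEq ?_
    filter_upwards [Ioi_mem_nhds hx] with y hy
    exact if_neg (not_lt.2 (le_of_lt hy))

theorem contDiff_one_ite_lt (hf : ContDiff ℝ 1 f) (hg : ContDiff ℝ 1 g) (ha : f a = g a)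
    (ha' : deriv f a = deriv g a) :
    ContDiff ℝ 1 (fun x => if x < a then f x else g x) := by
  have hf' := contDiff_one_iff_deriv.1 hf
  have hg' := contDiff_one_iff_deriv.1 hg
  have hderiv := hasDerivAt_ite_lt hf'.1 hg'.1 ha ha'
  refine contDiff_one_iff_deriv.2 ⟨fun x => (hderiv x).differentiableAt, ?_⟩
  rw [funext fun x => (hderiv x).deriv]
  simp_rw [← not_le, ite_not]
  exact hg'.2.if_le hf'.2 continuous_const continuous_id fun x hx => hx ▸ ha'.symm

end Gluing

namespace expNegInvGlue

theorem hasDerivAt_of_pos {x : ℝ} (hx : 0 < x) :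
    HasDerivAt expNegInvGlue (exp (-x⁻¹) / x ^ 2) x := by
  have h : HasDerivAt (fun y => exp (-y⁻¹)) (exp (-x⁻¹) / x ^ 2) x := by
    convert ((hasDerivAt_inv hx.ne').fun_neg).exp using 1
    ring
  refine h.congr_of_eventuallyEq ?_
  filter_upwards [Ioi_mem_nhds hx] with y hy
  simp [expNegInvGlue, not_le.2 (mem_Ioi.1 hy)]

theorem deriv_nonneg (x : ℝ) : 0 ≤ deriv expNegInvGlue x :=
  expNegInvGlue.monotone.deriv_nonneg

theorem deriv_le (x : ℝ) : deriv expNegInvGlue x ≤ 4 * exp (-2) := by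
  rcases le_or_gt x 0 with hx | hx
  · have hmin : IsLocalMin expNegInvGlue x :=
      Eventually.of_forall fun y => (zero_of_nonpos hx).symm ▸ nonneg y
    rw [hmin.deriv_eq_zero]
    positivity
  · rw [(hasDerivAt_of_pos hx).deriv]
    set z := x⁻¹
    -- the maximum of `z ^ 2 * exp (-z)` is attained at `z = 2`
    have hz : (z / 2) ^ 2 ≤ exp (z - 2) := by
      calc (z / 2) ^ 2 ≤ exp (z / 2 - 1) ^ 2 := by
            gcongr
            linarith [add_one_le_exp (z / 2 - 1)]
        _ = exp (z - 2) := by rw [← exp_nat_mul]; ring_nf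
    calc exp (-z) / x ^ 2 = 4 * (z / 2) ^ 2 * exp (-z) := by
          simp only [z]; field_simp; ring
      _ ≤ 4 * exp (z - 2) * exp (-z) := by gcongr
      _ = 4 * exp (-2) := by rw [mul_assoc, ← exp_add]; ring_nf

end expNegInvGlue

section BetaPen

variable {ε : ℝ}

/-- Agrees with `betaPen ε` on `[-ε, ∞)`, since `2 (s + ε) / (s - ε) = 2 - 4ε / (ε - s)`. -/
noncomputable def betaPenRight (ε s : ℝ) : ℝ :=
  -exp 2 * expNegInvGlue ((ε - s) / (4 * ε))

theorem betaPen_eq_ite (hε : 0 < ε) :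
    betaPen ε = fun s => if s < -ε then s / ε else betaPenRight ε s := by
  ext s
  unfold betaPen betaPenRight
  congr 1
  split_ifs with hs
  · have hy : 0 < (ε - s) / (4 * ε) := by apply div_pos <;> linarith
    rw [expNegInvGlue, if_neg hy.not_ge, neg_mul, ← exp_add]
    have hεs : ε - s ≠ 0 := by linarith
    have hsε : s - ε ≠ 0 := by linarith
    congr 2
    field_simp
    ring
  · rw [expNegInvGlue.zero_of_nonpos (div_nonpos_of_nonpos_of_nonneg (by linarith) (by linarith)),
      mul_zero]

theorem contDiff_betaPenRight {n : ℕ∞} : ContDiff ℝ n (betaPenRight ε) :=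
  contDiff_const.mul (expNegInvGlue.contDiff.comp (by fun_prop))

theorem deriv_betaPenRight (s : ℝ) :
    deriv (betaPenRight ε) s = exp 2 / (4 * ε) * deriv expNegInvGlue ((ε - s) / (4 * ε)) := by
  have hglue := (expNegInvGlue.contDiff (n := 1)).differentiable one_ne_zero
  have hinner : HasDerivAt (fun s => (ε - s) / (4 * ε)) (-1 / (4 * ε)) s := by
    simpa using ((hasDerivAt_id s).const_sub ε).div_const (4 * ε)
  have hderiv : HasDerivAt (betaPenRight ε)
      (-exp 2 * (deriv expNegInvGlue ((ε - s) / (4 * ε)) * (-1 / (4 * ε)))) s :=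
    ((hglue _).hasDerivAt.comp s hinner).const_mul (-exp 2)
  rw [hderiv.deriv]
  ring

theorem betaPenRight_neg_self (hε : 0 < ε) : betaPenRight ε (-ε) = -1 := by
  have : (ε - -ε) / (4 * ε) = 2⁻¹ := by field_simp; ring
  rw [betaPenRight, this, expNegInvGlue, if_neg (by norm_num), neg_mul, ← exp_add]
  norm_num

theorem deriv_betaPenRight_neg_self (hε : 0 < ε) : deriv (betaPenRight ε) (-ε) = 1 / ε := by
  have : (ε - -ε) / (4 * ε) = 2⁻¹ := by field_simp; ring
  rw [deriv_betaPenRight, this, (expNegInvGlue.hasDerivAt_of_pos (by norm_num)).deriv,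
    inv_inv, mul_div_assoc', mul_comm, ← mul_div_assoc, ← exp_add]
  field_simp
  norm_num

theorem deriv_betaPenRight_nonneg (hε : 0 < ε) (s : ℝ) : 0 ≤ deriv (betaPenRight ε) s := by
  rw [deriv_betaPenRight]
  have := expNegInvGlue.deriv_nonneg ((ε - s) / (4 * ε))
  positivity

theorem deriv_betaPenRight_le (hε : 0 < ε) (s : ℝ) : deriv (betaPenRight ε) s ≤ 1 / ε := by
  calc deriv (betaPenRight ε) s ≤ exp 2 / (4 * ε) * (4 * exp (-2)) := by
        rw [deriv_betaPenRight]
        gcongr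
        exact expNegInvGlue.deriv_le _
    _ = 1 / ε := by
        rw [show exp 2 / (4 * ε) * (4 * exp (-2)) = (exp 2 * exp (-2)) / ε by field_simp,
          ← exp_add]
        norm_num

end BetaPen

theorem stmt_4 (ε : ℝ) (hε : 0 < ε) :
    ContDiff ℝ 1 (betaPen ε) ∧
    ∀ s : ℝ, 0 ≤ deriv (betaPen ε) s ∧ deriv (betaPen ε) s ≤ 1 / ε := by
  have hlin : ContDiff ℝ 1 fun s : ℝ => s / ε := by fun_prop
  have hlin' : ∀ s, deriv (fun s : ℝ => s / ε) s = 1 / ε := fun s => by simp [one_div]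
  have hval : -ε / ε = betaPenRight ε (-ε) := by
    rw [betaPenRight_neg_self hε, neg_div, div_self hε.ne']
  have hslope : deriv (fun s : ℝ => s / ε) (-ε) = deriv (betaPenRight ε) (-ε) := by
    rw [hlin', deriv_betaPenRight_neg_self hε]
  rw [betaPen_eq_ite hε]
  refine ⟨contDiff_one_ite_lt hlin contDiff_betaPenRight hval hslope, fun s => ?_⟩
  rw [(hasDerivAt_ite_lt (hlin.differentiable one_ne_zero)
    (contDiff_betaPenRight.differentiable one_ne_zero) hval hslope s).deriv]
  split_ifs
  · rw [hlin']
    exact ⟨by positivity, le_rfl⟩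
  · exact ⟨deriv_betaPenRight_nonneg hε s, deriv_betaPenRight_le hε s⟩
end
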